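/- Let A, B be n×n positive definite complex matrices and v ∈ [0,1]. Suppose 0 < m·I ≤ A, B ≤ M·I for scalars 0 < m ≤ M, and let K(h) = (h+1)²/(4h) with h = M/m. Then the weighted arithmetic mean satisfies A ∇_v B ≤ K(h) · (A ♯_v B). -/

import Mathlib

open Matrix
open scoped ComplexOrder

noncomputable section
namespace Paper

variable {n : ℕ}

/-- Real part `(A + Aᴴ)/2`. -/
def re (A : Matrix (Fin n) (Fin n) ℂ) : Matrix (Fin n) (Fin n) ℂ := (2⁻¹ : ℂ) • (A + Aᴴ)

/-- Imaginary part `(A - Aᴴ)/(2i)`. -/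
def im (A : Matrix (Fin n) (Fin n) ℂ) : Matrix (Fin n) (Fin n) ℂ :=
  (2 * Complex.I)⁻¹ • (A - Aᴴ)

/-- The sector `S_α`. -/
def sector (α : ℝ) : Set ℂ := {z | 0 < z.re ∧ |z.im| ≤ z.re * Real.tan α}

/-- Numerical range of a matrix. -/
def numericalRange (A : Matrix (Fin n) (Fin n) ℂ) : Set ℂ :=
  {z | ∃ x : Fin n → ℂ, star x ⬝ᵥ x = 1 ∧ z = star x ⬝ᵥ (A *ᵥ x)}

/-- Loewner order: `X ≤ Y` iff `Y - X` is positive semidefinite. -/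
def loewnerLE (X Y : Matrix (Fin n) (Fin n) ℂ) : Prop := (Y - X).PosSemidef

lemma re_isHermitian (A : Matrix (Fin n) (Fin n) ℂ) : (re A).IsHermitian := by
  show ((2⁻¹ : ℂ) • (A + Aᴴ))ᴴ = (2⁻¹ : ℂ) • (A + Aᴴ)
  rw [Matrix.conjTranspose_smul, Matrix.conjTranspose_add,
    Matrix.conjTranspose_conjTranspose, add_comm Aᴴ A]
  simp

/-- The `j`-th largest element of `v` (descending sort). -/
def nthLargest (v : Fin n → ℝ) (j : Fin n) : ℝ :=
  ((List.ofFn v).mergeSort (fun a b => decide (b ≤ a))).get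
    (Fin.cast (by simp) j)

/-- `j`-th largest eigenvalue of a Hermitian matrix. -/
def eigDesc {A : Matrix (Fin n) (Fin n) ℂ} (hA : A.IsHermitian) (j : Fin n) : ℝ :=
  nthLargest hA.eigenvalues j

/-- `j`-th largest singular value. -/
def singular (A : Matrix (Fin n) (Fin n) ℂ) (j : Fin n) : ℝ :=
  nthLargest (fun i => Real.sqrt ((Matrix.isHermitian_conjTranspose_mul_self A).eigenvalues i)) j

/-- The square root of a positive semidefinite matrix, as `Matrix.PosSemidef.sqrt` was defined
in the older Mathlib. -/
def psdSqrt {A : Matrix (Fin n) (Fin n) ℂ} (hA : A.PosSemidef) : Matrix (Fin n) (Fin n) ℂ :=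
  hA.1.eigenvectorUnitary.1 * diagonal ((↑) ∘ (√·) ∘ hA.1.eigenvalues) *
    (star hA.1.eigenvectorUnitary : Matrix (Fin n) (Fin n) ℂ)

/-- Weighted geometric mean of positive definite matrices. -/
def sharp (v : ℝ) {A B : Matrix (Fin n) (Fin n) ℂ} (hA : A.PosDef) (hB : B.PosDef) :
    Matrix (Fin n) (Fin n) ℂ :=
  psdSqrt hA.posSemidef *
    (Matrix.isHermitian_mul_mul_conjTranspose (psdSqrt hA.posSemidef)⁻¹ hB.1).cfc
      (fun x => Real.rpow x v) * psdSqrt hA.posSemidef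

/-- Weighted arithmetic mean. -/
def arith (v : ℝ) (A B : Matrix (Fin n) (Fin n) ℂ) : Matrix (Fin n) (Fin n) ℂ :=
  (1 - v) • A + v • B

/-- Weighted harmonic mean. -/
def harm (v : ℝ) (A B : Matrix (Fin n) (Fin n) ℂ) : Matrix (Fin n) (Fin n) ℂ :=
  ((1 - v) • A⁻¹ + v • B⁻¹)⁻¹

/-- Kantorovich constant. -/
def K (h : ℝ) : ℝ := (h + 1) ^ 2 / (4 * h)

/-!
Put `S = A^{1/2}`, `C = S⁻¹ B S⁻¹` and `h = M / m`. The bounds `m ≤ A, B ≤ M` give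
`h⁻¹ A ≤ B ≤ h A`, i.e. `h⁻¹ ≤ C ≤ h`, and the claim is the congruence by `S` of
`(1 - v) + v C ≤ K(h) C^v`. By the functional calculus it suffices to show
`(1 - v) + v t ≤ K(h) t^v` for `t ∈ [h⁻¹, h]`. Multiply both sides by `(1 - v) t + v`:
the left side becomes `(t + 1)²/4 - ((2v - 1)(t - 1))²/4 ≤ (t + 1)²/4 ≤ K(h) t`, and
`t ≤ t^v ((1 - v) t + v)` is weighted AM-GM.
-/

-- In this order `X ≤ Y` unfolds to `loewnerLE X Y`.
open scoped MatrixOrder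

lemma sq_add_one_div_four_le_K_mul {h t : ℝ} (hh : 0 < h) (ht₁ : h⁻¹ ≤ t) (ht₂ : t ≤ h) :
    (t + 1) ^ 2 / 4 ≤ K h * t := by
  have hht : 1 ≤ h * t := by simpa [hh.ne'] using mul_le_mul_of_nonneg_left ht₁ hh.le
  rw [K, div_mul_eq_mul_div, div_le_div_iff₀ (by norm_num) (by positivity)]
  nlinarith [mul_nonneg (sub_nonneg.mpr ht₂) (sub_nonneg.mpr hht)]

lemma mul_le_sq_add_one_div_four (t v : ℝ) :
    ((1 - v) + v * t) * ((1 - v) * t + v) ≤ (t + 1) ^ 2 / 4 := by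
  nlinarith [sq_nonneg ((2 * v - 1) * (t - 1))]

lemma one_sub_add_mul_le_K_mul_rpow {h t v : ℝ} (hh : 0 < h) (hv : v ∈ Set.Icc (0 : ℝ) 1)
    (ht₁ : h⁻¹ ≤ t) (ht₂ : t ≤ h) : (1 - v) + v * t ≤ K h * t ^ v := by
  obtain ⟨hv₀, hv₁⟩ := hv
  have ht : 0 < t := (inv_pos.mpr hh).trans_le ht₁
  have hK : 0 ≤ K h := by unfold K; positivity
  have amgm : t ^ (1 - v) ≤ (1 - v) * t + v := by
    simpa using Real.geom_mean_le_arith_mean2_weighted (sub_nonneg.mpr hv₁) hv₀ ht.le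
      zero_le_one (sub_add_cancel 1 v)
  have hpos : 0 < (1 - v) * t + v := (Real.rpow_pos_of_pos ht _).trans_le amgm
  refine le_of_mul_le_mul_right ?_ hpos
  calc ((1 - v) + v * t) * ((1 - v) * t + v) ≤ K h * t :=
        (mul_le_sq_add_one_div_four t v).trans (sq_add_one_div_four_le_K_mul hh ht₁ ht₂)
    _ = K h * t ^ v * t ^ (1 - v) := by
        rw [mul_assoc, ← Real.rpow_add ht, add_sub_cancel, Real.rpow_one]
    _ ≤ K h * t ^ v * ((1 - v) * t + v) := by gcongr

section StarOrderedAlgebra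

variable {A : Type*} [Ring A] [StarRing A] [PartialOrder A] [StarOrderedRing A] [Algebra ℝ A]

lemma conjugate_le_smul_one_of_le_smul {a b d : A} {r : ℝ} (hd : d * a * star d = 1)
    (hba : b ≤ r • a) : d * b * star d ≤ r • (1 : A) := by
  simpa [hd] using star_right_conjugate_le_conjugate hba d

variable [StarModule ℝ A]

lemma le_div_smul_of_smul_one_le {a b : A} {r s : ℝ} (hr : 0 < r) (hs : 0 ≤ s)
    (ha : r • (1 : A) ≤ a) (hb : b ≤ s • (1 : A)) : b ≤ (s / r) • a :=
  calc b ≤ s • (1 : A) := hb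
    _ = (s / r) • r • (1 : A) := by rw [smul_smul, div_mul_cancel₀ s hr.ne']
    _ ≤ (s / r) • a := smul_le_smul_of_nonneg_left ha (div_nonneg hs hr.le)

lemma inv_smul_one_le_conjugate_of_le_smul {a b d : A} {r : ℝ} (hr : 0 < r)
    (hd : d * a * star d = 1) (hab : a ≤ r • b) : r⁻¹ • (1 : A) ≤ d * b * star d := by
  have h := smul_le_smul_of_nonneg_left
    (by simpa [hd] using star_right_conjugate_le_conjugate hab d) (inv_nonneg.mpr hr.le)
  rwa [inv_smul_smul₀ hr.ne'] at h

variable [TopologicalSpace A] [ContinuousFunctionalCalculus ℝ A IsSelfAdjoint]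
  [NonnegSpectrumClass ℝ A]

lemma one_sub_smul_add_smul_le_K_smul_cfc_rpow {c : A} {h v : ℝ} (hh : 0 < h)
    (hv : v ∈ Set.Icc (0 : ℝ) 1) (hc₁ : h⁻¹ • (1 : A) ≤ c) (hc₂ : c ≤ h • (1 : A)) :
    (1 - v) • (1 : A) + v • c ≤ K h • cfc (fun t : ℝ => t ^ v) c := by
  rw [← Algebra.algebraMap_eq_smul_one] at hc₁ hc₂
  have hc : IsSelfAdjoint c := .of_le hc₂ (.algebraMap A (.all _))
  have hspec : ∀ t ∈ spectrum ℝ c, h⁻¹ ≤ t ∧ t ≤ h := fun t ht =>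
    ⟨(algebraMap_le_iff_le_spectrum hc).mp hc₁ t ht,
      (le_algebraMap_iff_spectrum_le hc).mp hc₂ t ht⟩
  have hcont : ContinuousOn (fun t : ℝ => t ^ v) (spectrum ℝ c) := fun t ht =>
    (Real.continuousAt_rpow_const t v
      (Or.inl ((inv_pos.mpr hh).trans_le (hspec t ht).1).ne')).continuousWithinAt
  calc (1 - v) • (1 : A) + v • c = cfc (fun t : ℝ => (1 - v) + v * t) c := by
        rw [cfc_add .., cfc_const .., cfc_const_mul_id .., Algebra.algebraMap_eq_smul_one]
    _ ≤ cfc (fun t : ℝ => K h * t ^ v) c :=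
        cfc_mono fun t ht => one_sub_add_mul_le_K_mul_rpow hh hv (hspec t ht).1 (hspec t ht).2
    _ = K h • cfc (fun t : ℝ => t ^ v) c := cfc_const_mul ..

end StarOrderedAlgebra

section psdSqrt

variable {A : Matrix (Fin n) (Fin n) ℂ}

lemma psdSqrt_eq_cfc_sqrt (hA : A.PosSemidef) : psdSqrt hA = cfc Real.sqrt A := by
  rw [hA.1.cfc_eq]
  rfl

lemma psdSqrt_isSelfAdjoint (hA : A.PosSemidef) : IsSelfAdjoint (psdSqrt hA) := by
  rw [psdSqrt_eq_cfc_sqrt]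
  exact cfc_predicate _ A

lemma psdSqrt_mul_self (hA : A.PosSemidef) : psdSqrt hA * psdSqrt hA = A := by
  have hA' : 0 ≤ A := nonneg_iff_posSemidef.mpr hA
  rw [psdSqrt_eq_cfc_sqrt, ← cfc_mul .., cfc_congr fun x hx =>
    Real.mul_self_sqrt (spectrum_nonneg_of_nonneg hA' hx), cfc_id' ℝ A]

lemma isUnit_det_psdSqrt (hA : A.PosDef) : IsUnit (psdSqrt hA.posSemidef).det := by
  have hA' := hA.isUnit
  rw [← psdSqrt_mul_self hA.posSemidef] at hA'
  exact (isUnit_iff_isUnit_det _).mp (isUnit_of_mul_isUnit_left hA')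

lemma psdSqrt_inv_mul_self_mul_star_psdSqrt_inv (hA : A.PosDef) :
    (psdSqrt hA.posSemidef)⁻¹ * A * star (psdSqrt hA.posSemidef)⁻¹ = 1 := by
  have hdet := isUnit_det_psdSqrt hA
  rw [star_eq_conjTranspose, IsHermitian.inv (psdSqrt_isSelfAdjoint _)]
  set S := psdSqrt hA.posSemidef
  calc S⁻¹ * A * S⁻¹ = S⁻¹ * (S * S) * S⁻¹ := by rw [psdSqrt_mul_self]
    _ = 1 := by rw [nonsing_inv_mul_cancel_left _ _ hdet, mul_nonsing_inv _ hdet]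

lemma psdSqrt_mul_conjugate_inv_mul_psdSqrt (hA : A.PosDef) (B : Matrix (Fin n) (Fin n) ℂ) :
    psdSqrt hA.posSemidef * ((psdSqrt hA.posSemidef)⁻¹ * B * (psdSqrt hA.posSemidef)⁻¹ᴴ) *
      psdSqrt hA.posSemidef = B := by
  have hdet := isUnit_det_psdSqrt hA
  rw [IsHermitian.inv (psdSqrt_isSelfAdjoint _), Matrix.mul_assoc _ B,
    mul_nonsing_inv_cancel_left _ _ hdet, nonsing_inv_mul_cancel_right _ _ hdet]

end psdSqrt

/-- `A ∇ᵥ B ≤ K(h) (A ♯ᵥ B)`. -/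
theorem arith_le_kantorovich_smul_sharp (A B : Matrix (Fin n) (Fin n) ℂ) (hA : A.PosDef) (hB : B.PosDef)
    (v : ℝ) (hv : v ∈ Set.Icc 0 1) (m M : ℝ) (hm : 0 < m) (hmM : m ≤ M)
    (hA1 : loewnerLE (m • (1 : Matrix (Fin n) (Fin n) ℂ)) A) (hA2 : loewnerLE A (M • 1))
    (hB1 : loewnerLE (m • (1 : Matrix (Fin n) (Fin n) ℂ)) B) (hB2 : loewnerLE B (M • 1)) :
    loewnerLE (arith v A B) (K (M / m) • sharp v hA hB) := by
  have hSS := psdSqrt_mul_self hA.posSemidef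
  have hSA := psdSqrt_inv_mul_self_mul_star_psdSqrt_inv hA
  have hSC := psdSqrt_mul_conjugate_inv_mul_psdSqrt hA B
  set S := psdSqrt hA.posSemidef
  set C := S⁻¹ * B * S⁻¹ᴴ
  have hh : 0 < M / m := div_pos (hm.trans_le hmM) hm
  have hM : 0 ≤ M := hm.le.trans hmM
  have hC₁ : (M / m)⁻¹ • (1 : Matrix (Fin n) (Fin n) ℂ) ≤ C :=
    inv_smul_one_le_conjugate_of_le_smul hh hSA (le_div_smul_of_smul_one_le hm hM hB1 hA2)
  have hC₂ : C ≤ (M / m) • (1 : Matrix (Fin n) (Fin n) ℂ) :=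
    conjugate_le_smul_one_of_le_smul hSA (le_div_smul_of_smul_one_le hm hM hA1 hB2)
  show arith v A B ≤ K (M / m) • sharp v hA hB
  calc arith v A B = S * ((1 - v) • 1 + v • C) * S := by
        simp only [arith, mul_add, add_mul, mul_smul_comm, smul_mul_assoc, mul_one, hSS, hSC]
    _ ≤ S * (K (M / m) • cfc (fun t : ℝ => t ^ v) C) * S :=
        (psdSqrt_isSelfAdjoint _).conjugate_le_conjugate
          (one_sub_smul_add_smul_le_K_smul_cfc_rpow hh hv hC₁ hC₂)
    _ = K (M / m) • sharp v hA hB := by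
        rw [mul_smul_comm, smul_mul_assoc, (isHermitian_mul_mul_conjTranspose S⁻¹ hB.1).cfc_eq]
        rfl

end Paper
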